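/- arXiv:1604.07665 — 3 statements merged into one kernel-verified Lean document; each statement's English description precedes it below -/
import Mathlib

section
/- Let F = GF(2^p) and let ω be a primitive element of F. The 3×3 lower triangular Toeplitz matrix with first column [1, ω^{i_1}, ω^{i_2}]^T (where 0 ≤ i_1, i_2 < 2^p − 1) is superregular if and only if 2·i_1 ≢ i_2 (mod 2^p − 1). -/
/-! The proper minors of the lower triangular Toeplitz matrix with first column `[1, a, b]` are
`1, a, b` and `a² - b`, so it is superregular exactly when `a ≠ 0`, `b ≠ 0` and `a² ≠ b`. For
`a = ω ^ i₁`, `b = ω ^ i₂` the first two conditions hold because `ω` has finite order, and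
`ω ^ (2 i₁) = ω ^ i₂` holds exactly when `2 i₁ ≡ i₂` modulo the order of `ω`. -/

open Matrix

/-- Lower triangular Toeplitz matrix with first column `c`. -/
def LTT {R : Type*} [CommRing R] {n : ℕ} (c : Fin n → R) : Matrix (Fin n) (Fin n) R :=
  Matrix.of fun j k =>
    if (k : ℕ) ≤ (j : ℕ) then c ⟨(j : ℕ) - (k : ℕ), lt_of_le_of_lt (Nat.sub_le _ _) j.isLt⟩
    else 0

/-- A lower triangular matrix is superregular if every proper submatrix
(rows `j₁ < ... < j_r`, columns `h₁ < ... < h_r` with `h_t ≤ j_t`) is nonsingular. -/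
def Superregular {F : Type*} [Field F] {n : ℕ} (A : Matrix (Fin n) (Fin n) F) : Prop :=
  ∀ (r : ℕ) (row col : Fin r → Fin n), StrictMono row → StrictMono col →
    (∀ t, col t ≤ row t) → (A.submatrix row col).det ≠ 0

/-- Two `n × n` lower triangular matrices are jointly superregular if every
proper (not trivially rank deficient) square submatrix of any matrix formed by
mixing rows of `A` and rows of `B` is nonsingular.  Rows are selected sorted by
their index (i.e. by increasing support), a row index may be used by both `A`
and `B`, and properness means `col t ≤ row t` for all `t`. -/
def JointlySuperregular {F : Type*} [Field F] {n : ℕ}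
    (A B : Matrix (Fin n) (Fin n) F) : Prop :=
  ∀ (r : ℕ) (row : Fin r → Fin n) (tag : Fin r → Bool) (col : Fin r → Fin n),
    Monotone row → Function.Injective (fun t => (row t, tag t)) → StrictMono col →
    (∀ t, col t ≤ row t) →
    (Matrix.of fun t s => (if tag t then A else B) (row t) (col s)).det ≠ 0

lemma LTT_isLowerTriangular {R : Type*} [CommRing R] {n : ℕ} (c : Fin n → R) :
    (LTT c).IsLowerTriangular :=
  fun _ _ hjk => if_neg (not_le.mpr hjk)

lemma det_submatrix_LTT_three_mem {F : Type*} [Field F] (a b : F) {r : ℕ}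
    {row col : Fin r → Fin 3} (hrow : StrictMono row) (hcol : StrictMono col)
    (hle : ∀ t, col t ≤ row t) :
    ((LTT ![1, a, b]).submatrix row col).det ∈ ({1, a, b, a ^ 2 - b} : Set F) := by
  have hr : r ≤ 3 := by simpa using Fintype.card_le_of_injective row hrow.injective
  interval_cases r
  · simp
  · rw [det_fin_one, submatrix_apply]
    have h := hle 0
    generalize row 0 = j, col 0 = k at h ⊢
    fin_cases j <;> fin_cases k <;> simp_all [LTT]
  · rw [det_fin_two]
    have h₀ := hle 0
    have h₁ := hle 1
    have hj := hrow (show (0 : Fin 2) < 1 by decide)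
    have hk := hcol (show (0 : Fin 2) < 1 by decide)
    simp only [submatrix_apply]
    generalize row 0 = j₀, row 1 = j₁, col 0 = k₀, col 1 = k₁ at *
    fin_cases j₀ <;> fin_cases j₁ <;> fin_cases k₀ <;> fin_cases k₁ <;> simp_all [LTT, sq]
  · rw [hrow.eq_id, hcol.eq_id, submatrix_id_id,
      det_of_isLowerTriangular _ (LTT_isLowerTriangular _)]
    simp [LTT]

lemma superregular_LTT_three_iff {F : Type*} [Field F] (a b : F) :
    Superregular (LTT ![1, a, b]) ↔ a ≠ 0 ∧ b ≠ 0 ∧ a ^ 2 ≠ b := by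
  refine ⟨fun h => ⟨?_, ?_, ?_⟩, fun ⟨ha, hb, hab⟩ r row col hrow hcol hle => ?_⟩
  · have := h 1 ![1] ![0] (Subsingleton.strictMono _) (Subsingleton.strictMono _) (by decide)
    rw [det_fin_one] at this
    simpa [LTT] using this
  · have := h 1 ![2] ![0] (Subsingleton.strictMono _) (Subsingleton.strictMono _) (by decide)
    rw [det_fin_one] at this
    simpa [LTT] using this
  · have := h 2 ![1, 2] ![0, 1] (by decide) (by decide) (by decide)
    rw [det_fin_two] at this
    simpa [LTT, sq, sub_eq_zero] using this
  · rcases det_submatrix_LTT_three_mem a b hrow hcol hle with h | h | h | h <;> rw [h]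
    exacts [one_ne_zero, ha, hb, sub_ne_zero.mpr hab]

theorem stmt1_general {p : ℕ} {F : Type*} [Field F] (ω : F) (hω : orderOf ω = 2 ^ p - 1)
    (i₁ i₂ : ℕ) (h₁ : i₁ < 2 ^ p - 1) :
    Superregular (LTT ![(1 : F), ω ^ i₁, ω ^ i₂]) ↔ ¬ (2 * i₁ ≡ i₂ [MOD 2 ^ p - 1]) := by
  have hω_fin : IsOfFinOrder ω := orderOf_pos_iff.mp (hω ▸ i₁.zero_le.trans_lt h₁)
  have hω_ne : ω ≠ 0 := hω_fin.isUnit.ne_zero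
  simp only [superregular_LTT_three_iff, ← pow_mul', ne_eq, pow_eq_zero_iff', hω_ne,
    false_and, not_false_eq_true, true_and, hω_fin.pow_eq_pow_iff_modEq, hω]

theorem stmt1 {p : ℕ} (hp : 0 < p) {F : Type*} [Field F] [Fintype F]
    (hF : Fintype.card F = 2 ^ p) (ω : F) (hω : orderOf ω = 2 ^ p - 1)
    (i₁ i₂ : ℕ) (h₁ : i₁ < 2 ^ p - 1) (h₂ : i₂ < 2 ^ p - 1) :
    Superregular (LTT ![(1 : F), ω ^ i₁, ω ^ i₂]) ↔ ¬ (2 * i₁ ≡ i₂ [MOD 2 ^ p - 1]) :=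
  stmt1_general ω hω i₁ i₂ h₁
end

section
/- Let F = GF(2^p) with primitive element ω. Suppose the 3×3 lower triangular Toeplitz matrix with first column [1, ω^{i_1}, ω^{i_2}]^T is superregular. Then the 4×4 lower triangular Toeplitz matrix with first column [1, ω^{i_1}, ω^{i_2}, ω^{i_3}]^T is superregular if and only if 3i_1 ≢ i_3, i_1 + i_2 ≢ i_3, and 2i_2 ≢ i_1 + i_3 (all congruences mod 2^p − 1). -/
/-!
Over any field, the proper minors of the lower triangular Toeplitz matrix with first column
`(1, a, b, c)` are, up to sign and powers of `a`, among `a`, `b`, `c`, `a² - b`, `ab - c`,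
`b² - ac` and `a³ - 2ab + c`, and each of these occurs; so superregularity means that these
seven quantities are nonzero. For `a, b, c` powers of `ω` the first three never vanish, and
`a² ≠ b` is superregularity of the `3 × 3` matrix. In characteristic `2` the last quantity is
`a³ - c`, so the remaining conditions are `ω^(i₁+i₂) ≠ ω^i₃`, `ω^(2i₂) ≠ ω^(i₁+i₃)` and
`ω^(3i₁) ≠ ω^i₃`, i.e. the three non-congruences modulo the order `2^p - 1` of `ω`.
-/

open Matrix

lemma StrictMono.eq_id_of_fin {n : ℕ} {f : Fin n → Fin n} (hf : StrictMono f) : f = id :=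
  (hf.range_inj strictMono_id).mp <| by
    rw [Set.range_id, Set.range_eq_univ]
    exact Finite.injective_iff_surjective.mp hf.injective

lemma StrictMono.exists_eq_succAbove {n : ℕ} {f : Fin n → Fin (n + 1)} (hf : StrictMono f) :
    ∃ m : Fin (n + 1), f = m.succAbove := by
  obtain ⟨m, hm⟩ : ∃ m, m ∉ Set.range f := by
    by_contra! h
    simpa using Fintype.card_le_of_surjective f h
  choose g hg using fun t => Fin.exists_succAbove_eq fun h : f t = m => hm ⟨t, h⟩
  have hg_mono : StrictMono g := fun s t hst =>
    (Fin.strictMono_succAbove m).lt_iff_lt.mp (by rw [hg, hg]; exact hf hst)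
  exact ⟨m, funext fun t => by rw [← hg, hg_mono.eq_id_of_fin, id]⟩

lemma Fin.le_of_forall_succAbove_le {n : ℕ} {j k : Fin (n + 1)}
    (h : ∀ t, k.succAbove t ≤ j.succAbove t) : j ≤ k := by
  by_contra! hkj
  have hk : k ≠ Fin.last n := (hkj.trans_le (Fin.le_last j)).ne
  have := h (k.castPred hk)
  rw [Fin.succAbove_of_le_castSucc _ _ (by simp),
    Fin.succAbove_of_castSucc_lt _ _ (by simpa)] at this
  simp [Fin.le_def] at this

section LTTFour

variable {F : Type*} [Field F] {a b c : F}

lemma LTT_four (a b c : F) :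
    LTT ![1, a, b, c] = !![1, 0, 0, 0; a, 1, 0, 0; b, a, 1, 0; c, b, a, 1] := by
  ext j k; fin_cases j <;> fin_cases k <;> rfl

lemma LTT_four_apply_ne_zero (ha : a ≠ 0) (hb : b ≠ 0) (hc : c ≠ 0) {j k : Fin 4} (h : k ≤ j) :
    LTT ![1, a, b, c] j k ≠ 0 := by
  rw [LTT_four]
  fin_cases j <;> fin_cases k <;> first | exact absurd h (by decide) | simp [ha, hb, hc]

lemma det_LTT_four_submatrix_two_ne_zero (ha : a ≠ 0) (hb : b ≠ 0) (hab : a ^ 2 ≠ b)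
    (habc : a * b ≠ c) (hbac : b ^ 2 ≠ a * c) {row col : Fin 2 → Fin 4}
    (hrow : StrictMono row) (hcol : StrictMono col) (hle : ∀ t, col t ≤ row t) :
    ((LTT ![1, a, b, c]).submatrix row col).det ≠ 0 := by
  have hj := hrow Fin.zero_lt_one
  have hk := hcol Fin.zero_lt_one
  have h₀ := hle 0
  have h₁ := hle 1
  rw [det_fin_two, LTT_four]
  simp only [submatrix_apply]
  generalize row 0 = j₀, row 1 = j₁, col 0 = k₀, col 1 = k₁ at *
  fin_cases j₀ <;> fin_cases j₁ <;> try contradiction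
  all_goals fin_cases k₀ <;> fin_cases k₁ <;> try contradiction
  all_goals simp <;> grind

lemma det_LTT_four_submatrix_succAbove_ne_zero (ha : a ≠ 0) (hab : a ^ 2 ≠ b)
    (hs : a ^ 3 - 2 * a * b + c ≠ 0) {j k : Fin 4} (hjk : j ≤ k) :
    ((LTT ![1, a, b, c]).submatrix j.succAbove k.succAbove).det ≠ 0 := by
  rw [det_fin_three, LTT_four]
  fin_cases j <;> fin_cases k <;> try contradiction
  all_goals simp [Fin.succAbove] <;> grind

theorem superregular_LTT_four_iff :
    Superregular (LTT ![1, a, b, c]) ↔ a ≠ 0 ∧ b ≠ 0 ∧ c ≠ 0 ∧ a ^ 2 ≠ b ∧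
      a ^ 3 - 2 * a * b + c ≠ 0 ∧ a * b ≠ c ∧ b ^ 2 ≠ a * c := by
  constructor
  · intro hS
    rw [LTT_four] at hS
    have h₁ := fun i => hS 1 ![i] ![0] (Subsingleton.strictMono _) (Subsingleton.strictMono _)
      (by simp)
    have h₂ := fun i j k => hS 2 ![i, j] ![0, k]
    have h₃ := hS 3 ![1, 2, 3] ![0, 1, 2] (by decide) (by decide) (by decide)
    simp only [det_fin_one, det_fin_two, det_fin_three] at h₁ h₂ h₃
    refine ⟨?_, ?_, ?_, ?_, ?_, ?_, ?_⟩
    · simpa using h₁ 1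
    · simpa using h₁ 2
    · simpa using h₁ 3
    · simpa [sq, sub_eq_zero, eq_comm] using h₂ 1 2 1 (by decide) (by decide) (by decide)
    · contrapose! h₃
      simp only [submatrix_apply, of_apply, cons_val', cons_val_zero, cons_val_one, cons_val,
        cons_val_fin_one]
      linear_combination h₃
    · simpa [sub_eq_zero, eq_comm] using h₂ 1 3 1 (by decide) (by decide) (by decide)
    · simpa [sq, sub_eq_zero] using h₂ 2 3 1 (by decide) (by decide) (by decide)
  · rintro ⟨ha, hb, hc, hab, hs, habc, hbac⟩ r row col hrow hcol hle
    have hr : r ≤ 4 := by simpa using Fintype.card_le_of_injective row hrow.injective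
    interval_cases r
    · simp
    · simpa using LTT_four_apply_ne_zero ha hb hc (hle 0)
    · exact det_LTT_four_submatrix_two_ne_zero ha hb hab habc hbac hrow hcol hle
    · obtain ⟨j, rfl⟩ := hrow.exists_eq_succAbove
      obtain ⟨k, rfl⟩ := hcol.exists_eq_succAbove
      exact det_LTT_four_submatrix_succAbove_ne_zero ha hab hs (Fin.le_of_forall_succAbove_le hle)
    · rw [hrow.eq_id_of_fin, hcol.eq_id_of_fin, submatrix_id_id, LTT_four]
      simp [det_succ_row_zero, Fin.sum_univ_succ]

end LTTFour

lemma sq_ne_of_superregular_LTT_three {F : Type*} [Field F] {a b : F}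
    (h : Superregular (LTT ![1, a, b])) : a ^ 2 ≠ b := by
  have := h 2 ![1, 2] ![0, 1] (by decide) (by decide) (by decide)
  rw [det_fin_two] at this
  simpa [LTT, sq, sub_eq_zero, eq_comm] using this

theorem stmt2_general {p : ℕ} (hp : 0 < p) {F : Type*} [Field F] [Fintype F]
    (hF : Fintype.card F = 2 ^ p) (ω : F) (hω : orderOf ω = 2 ^ p - 1)
    (i₁ i₂ i₃ : ℕ) (hA₃ : Superregular (LTT ![(1 : F), ω ^ i₁, ω ^ i₂])) :
    Superregular (LTT ![(1 : F), ω ^ i₁, ω ^ i₂, ω ^ i₃]) ↔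
      (¬ (3 * i₁ ≡ i₃ [MOD 2 ^ p - 1]) ∧ ¬ (i₁ + i₂ ≡ i₃ [MOD 2 ^ p - 1]) ∧
        ¬ (2 * i₂ ≡ i₁ + i₃ [MOD 2 ^ p - 1])) := by
  have hfin : IsOfFinOrder ω :=
    orderOf_pos_iff.mp (hω ▸ Nat.sub_pos_of_lt (Nat.one_lt_two_pow hp.ne'))
  have hpow (m n : ℕ) : ω ^ m = ω ^ n ↔ m ≡ n [MOD 2 ^ p - 1] := hω ▸ hfin.pow_eq_pow_iff_modEq
  have h2 : (2 : F) = 0 :=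
    (pow_eq_zero_iff hp.ne').mp (by exact_mod_cast hF ▸ FiniteField.cast_card_eq_zero F)
  have hcube : (ω ^ i₁) ^ 3 - 2 * ω ^ i₁ * ω ^ i₂ + ω ^ i₃ = ω ^ (3 * i₁) - ω ^ i₃ := by
    rw [pow_mul']
    linear_combination (ω ^ i₃ - ω ^ i₁ * ω ^ i₂) * h2
  have hsq := sq_ne_of_superregular_LTT_three hA₃
  rw [superregular_LTT_four_iff, hcube, sub_ne_zero]
  simp only [← pow_add, ← pow_mul', ne_eq, hpow] at hsq ⊢
  simp [hsq, hfin.isUnit.ne_zero]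

theorem stmt2 {p : ℕ} (hp : 0 < p) {F : Type*} [Field F] [Fintype F]
    (hF : Fintype.card F = 2 ^ p) (ω : F) (hω : orderOf ω = 2 ^ p - 1)
    (i₁ i₂ i₃ : ℕ) (h₁ : i₁ < 2 ^ p - 1) (h₂ : i₂ < 2 ^ p - 1) (h₃ : i₃ < 2 ^ p - 1)
    (hA₃ : Superregular (LTT ![(1 : F), ω ^ i₁, ω ^ i₂])) :
    Superregular (LTT ![(1 : F), ω ^ i₁, ω ^ i₂, ω ^ i₃]) ↔
      (¬ (3 * i₁ ≡ i₃ [MOD 2 ^ p - 1]) ∧ ¬ (i₁ + i₂ ≡ i₃ [MOD 2 ^ p - 1]) ∧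
        ¬ (2 * i₂ ≡ i₁ + i₃ [MOD 2 ^ p - 1])) :=
  stmt2_general hp hF ω hω i₁ i₂ i₃ hA₃
end

section
/- Over any field F = GF(2^p) with p ≥ 1 and any n ≥ 2, if A is an n×n superregular lower triangular Toeplitz matrix with first column [1, ω^{i_1}, ...], then A and A⁻¹ are not jointly superregular, because the (2,1) entry of A⁻¹ equals the (2,1) entry of A (namely ω^{i_1}), violating the necessary condition i_{a_1} ≠ i_{b_1}. -/
open Matrix

/-! Row 1 of the inverse of a unit lower triangular matrix is supported on columns 0 and 1, so
`A⁻¹ * A = 1` forces `A⁻¹ 1 0 = -A 1 0`, which is `A 1 0` in characteristic 2. The mixed minor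
formed by row 1 of `A` and row 1 of `A⁻¹` on columns 0 and 1 is then `A 1 0 - A⁻¹ 1 0 = 0`. -/

section LTT

variable {R : Type*} [CommRing R] {m : ℕ}

lemma isLowerTriangular_LTT (c : Fin m → R) : (LTT c).IsLowerTriangular :=
  fun _ _ hlt => if_neg (not_le.mpr hlt)

lemma LTT_apply_self (c : Fin (m + 1) → R) (j : Fin (m + 1)) : LTT c j j = c 0 := by
  simp [LTT]

end LTT

namespace Matrix

variable {R : Type*} [CommRing R] {m : ℕ} {A B : Matrix (Fin m) (Fin m) R}

lemma IsLowerTriangular.inv (hA : A.IsLowerTriangular) : A⁻¹.IsLowerTriangular := by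
  by_cases hdet : IsUnit A.det
  · have := A.invertibleOfIsUnitDet hdet
    exact blockTriangular_inv_of_blockTriangular hA
  · rw [nonsing_inv_apply_not_isUnit A hdet]
    exact fun _ _ _ => rfl

lemma mul_apply_self_of_isLowerTriangular (hA : A.IsLowerTriangular)
    (hB : B.IsLowerTriangular) (i : Fin m) : (A * B) i i = A i i * B i i := by
  refine Finset.sum_eq_single i (fun k _ hki => ?_) (absurd (Finset.mem_univ i))
  rcases hki.lt_or_gt with hlt | hgt
  · exact mul_eq_zero_of_right _ (hB hlt)
  · exact mul_eq_zero_of_left (hA hgt) _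

lemma mul_apply_of_val_eq_succ_of_isLowerTriangular (hA : A.IsLowerTriangular)
    (hB : B.IsLowerTriangular) {i j : Fin m} (hij : (i : ℕ) = j + 1) :
    (A * B) i j = A i j * B j j + A i i * B i j := by
  refine Fintype.sum_eq_add j i (by simp [Fin.ext_iff, hij]) fun k ⟨hkj, hki⟩ => ?_
  rcases lt_or_gt_of_ne (Fin.val_ne_of_ne hki) with hlt | hgt
  · have : k < j := by rw [Fin.lt_def]; have := Fin.val_ne_of_ne hkj; omega
    exact mul_eq_zero_of_right _ (hB this)
  · exact mul_eq_zero_of_left (hA hgt) _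

lemma inv_mul_cancel_of_isLowerTriangular (hA : A.IsLowerTriangular) (hdiag : ∀ i, A i i = 1) :
    A⁻¹ * A = 1 :=
  nonsing_inv_mul A (by simp [det_of_isLowerTriangular A hA, hdiag])

lemma inv_apply_self_of_isLowerTriangular (hA : A.IsLowerTriangular) (hdiag : ∀ i, A i i = 1)
    (i : Fin m) : A⁻¹ i i = 1 := by
  have h := congr_fun₂ (inv_mul_cancel_of_isLowerTriangular hA hdiag) i i
  rwa [mul_apply_self_of_isLowerTriangular hA.inv hA, hdiag, mul_one, one_apply_eq] at h

lemma inv_apply_of_val_eq_succ_of_isLowerTriangular (hA : A.IsLowerTriangular)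
    (hdiag : ∀ i, A i i = 1) {i j : Fin m} (hij : (i : ℕ) = j + 1) : A⁻¹ i j = -A i j := by
  have h := congr_fun₂ (inv_mul_cancel_of_isLowerTriangular hA hdiag) i j
  rw [mul_apply_of_val_eq_succ_of_isLowerTriangular hA.inv hA hij, hdiag,
    inv_apply_self_of_isLowerTriangular hA hdiag, one_apply_ne (by simp [Fin.ext_iff, hij]),
    mul_one, one_mul] at h
  exact eq_neg_of_add_eq_zero_left h

end Matrix

lemma JointlySuperregular.mul_ne_mul {F : Type*} [Field F] {n : ℕ}
    {A B : Matrix (Fin n) (Fin n) F} (h : JointlySuperregular A B) {i j : Fin n} (hji : j < i) :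
    A i j * B i i ≠ A i i * B i j := by
  have := h 2 ![i, i] ![true, false] ![j, i] (by intro a b _; fin_cases a <;> fin_cases b <;> simp)
    (by intro a b; fin_cases a <;> fin_cases b <;> simp)
    (by intro a b hab; fin_cases a <;> fin_cases b <;> first | exact hji | simp at hab)
    (by intro t; fin_cases t <;> simp [hji.le])
  rw [det_fin_two] at this
  simpa [sub_eq_zero] using this

lemma charP_two_of_card_eq_two_pow {F : Type*} [Field F] [Fintype F] {p : ℕ} (hp : 0 < p)
    (hF : Fintype.card F = 2 ^ p) : CharP F 2 := by
  refine CharTwo.of_one_ne_zero_of_two_eq_zero one_ne_zero ((pow_eq_zero_iff hp.ne').mp ?_)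
  exact_mod_cast hF ▸ FiniteField.cast_card_eq_zero F

theorem stmt10 {p : ℕ} (hp : 0 < p) {F : Type*} [Field F] [Fintype F]
    (hF : Fintype.card F = 2 ^ p) (ω : F)
    {n : ℕ} (hn : 1 ≤ n) (i : Fin n → ℕ) :
    (LTT (Fin.cons (1 : F) fun t => ω ^ i t))⁻¹ ⟨1, by omega⟩ ⟨0, by omega⟩ =
      (LTT (Fin.cons (1 : F) fun t => ω ^ i t)) ⟨1, by omega⟩ ⟨0, by omega⟩ ∧
    ¬ JointlySuperregular (LTT (Fin.cons (1 : F) fun t => ω ^ i t))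
        (LTT (Fin.cons (1 : F) fun t => ω ^ i t))⁻¹ := by
  have : CharP F 2 := charP_two_of_card_eq_two_pow hp hF
  set A := LTT (Fin.cons (1 : F) fun t => ω ^ i t)
  have hA : A.IsLowerTriangular := isLowerTriangular_LTT _
  have hdiag : ∀ j, A j j = 1 := LTT_apply_self _
  have hsub : A⁻¹ ⟨1, by omega⟩ ⟨0, by omega⟩ = A ⟨1, by omega⟩ ⟨0, by omega⟩ := by
    rw [inv_apply_of_val_eq_succ_of_isLowerTriangular hA hdiag rfl, CharTwo.neg_eq]
  refine ⟨hsub, fun hJ => hJ.mul_ne_mul (i := ⟨1, by omega⟩) (j := ⟨0, by omega⟩)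
    (Fin.mk_lt_mk.mpr zero_lt_one) ?_⟩
  rw [hsub, hdiag, inv_apply_self_of_isLowerTriangular hA hdiag, mul_one, one_mul]
end
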